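/- arXiv:2510.07845 — 2 statements merged into one kernel-verified Lean document; each statement's English description precedes it below -/
import Mathlib

section
/- Adjointness of induction and restriction: for every Γ-invariant function f : V → ℂ (i.e. f(γ·v) = f(v) for all γ ∈ Γ, v ∈ V) and every function g : 𝔩 → ℂ, one has |Γ|^(−1) · Σ_{v ∈ V} f(v) · conj(Ind g (v)) = |Λ|^(−1) · Σ_{X ∈ 𝔩} Res f(X) · conj(g(X)). -/
/-!
Substituting `v ↦ γ⁻¹ • v` in the `γ`-th summand of `Σ_v f(v) · conj(Ind g(v))` and using the
`Γ`-invariance of `f` makes every summand equal to `Σ_{X ∈ 𝔩, N ∈ 𝔲} f(X + N) · conj(g(X))`, so the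
sum over `γ` contributes a factor `|Γ|`, while the remaining double sum is
`|𝔲| · Σ_X Res f(X) · conj(g(X))`.
-/

open scoped BigOperators

noncomputable section

namespace FiniteFourier

variable {F : Type*} [Field F] {V : Type*} [AddCommGroup V] [Module F V]
variable {Γ : Type*} [Group Γ] [MulAction Γ V]

/-- Restriction `Res f : 𝔩 → ℂ`, `Res f(X) = |𝔲|⁻¹ · Σ_{N ∈ 𝔲} f(X + N)`. -/
def resV (𝔲 𝔩 : Submodule F V) (f : V → ℂ) : ↥𝔩 → ℂ := fun X =>
  ((Nat.card ↥𝔲 : ℂ))⁻¹ * ∑ᶠ N : ↥𝔲, f ((X : V) + (N : V))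

open Classical in
/-- Induction `Ind g : V → ℂ`,
`Ind g(v) = |Λ|⁻¹ · |𝔲|⁻¹ · Σ_{γ ∈ Γ with γ·v ∈ 𝔭} g^∨(γ·v)` where `𝔭 = 𝔩 ⊕ 𝔲` and
`g^∨(X + N) = g(X)` for `X ∈ 𝔩`, `N ∈ 𝔲`.  (The inner sums over `X ∈ 𝔩`, `N ∈ 𝔲`
implement `g^∨` via the unique decomposition of `γ·v` in `𝔭` when `𝔩 ∩ 𝔲 = 0`.) -/
def indV (Λ : Subgroup Γ) (𝔩 𝔲 : Submodule F V) (g : ↥𝔩 → ℂ) : V → ℂ := fun v =>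
  (Nat.card ↥Λ : ℂ)⁻¹ * (Nat.card ↥𝔲 : ℂ)⁻¹ *
    ∑ᶠ γ : Γ, ∑ᶠ X : ↥𝔩, ∑ᶠ N : ↥𝔲,
      if γ • v = (X : V) + (N : V) then g X else 0

section InvariantSums

variable {G α ι R : Type*} [Fintype α] [CommSemiring R]

theorem sum_mul_comp_smul_of_invariant [Group G] [MulAction G α] {f : α → R}
    (hf : ∀ (γ : G) (a : α), f (γ • a) = f a) (h : α → R) (γ : G) :
    ∑ a, f a * h (γ • a) = ∑ a, f a * h a := by
  simpa only [MulAction.toPerm_apply, hf] using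
    Equiv.sum_comp (MulAction.toPerm γ) (fun a => f a * h a)

theorem sum_sum_mul_comp_smul_of_invariant [Group G] [Fintype G] [MulAction G α] {f : α → R}
    (hf : ∀ (γ : G) (a : α), f (γ • a) = f a) (h : α → R) :
    ∑ γ : G, ∑ a, f a * h (γ • a) = Fintype.card G • ∑ a, f a * h a := by
  simp only [sum_mul_comp_smul_of_invariant hf, Finset.sum_const, Finset.card_univ]

theorem sum_mul_sum_ite_eq [DecidableEq α] [Fintype ι] (f : α → R) (p : ι → α) (c : ι → R) :
    ∑ a, f a * ∑ i, (if a = p i then c i else 0) = ∑ i, f (p i) * c i := by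
  simp only [Finset.mul_sum, mul_ite, mul_zero]
  rw [Finset.sum_comm]
  simp only [Finset.sum_ite_eq', Finset.mem_univ, if_true]

end InvariantSums

theorem ind_res_adjoint_general [Finite V] [Finite Γ]
    (Λ : Subgroup Γ)
    (𝔩 𝔲 : Submodule F V)
    (f : V → ℂ) (hf : ∀ (γ : Γ) (v : V), f (γ • v) = f v)
    (g : ↥𝔩 → ℂ) :
    (Nat.card Γ : ℂ)⁻¹ * ∑ᶠ v : V, f v * (starRingEnd ℂ) (indV Λ 𝔩 𝔲 g v)
      = (Nat.card ↥Λ : ℂ)⁻¹ * ∑ᶠ X : ↥𝔩, resV 𝔲 𝔩 f X * (starRingEnd ℂ) (g X) := by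
  classical
  cases nonempty_fintype V
  cases nonempty_fintype Γ
  have := Fintype.ofFinite 𝔩
  have := Fintype.ofFinite 𝔲
  set gCheck : V → ℂ := fun w =>
    ∑ x : 𝔩 × 𝔲, if w = (x.1 : V) + (x.2 : V) then (starRingEnd ℂ) (g x.1) else 0
  have star_indV (v : V) : (starRingEnd ℂ) (indV Λ 𝔩 𝔲 g v)
      = ((Nat.card Λ : ℂ)⁻¹ * (Nat.card 𝔲 : ℂ)⁻¹) * ∑ γ : Γ, gCheck (γ • v) := by
    simp only [indV, gCheck, finsum_eq_sum_of_fintype, Fintype.sum_prod_type, map_mul, map_inv₀,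
      map_natCast, map_sum, apply_ite (starRingEnd ℂ), map_zero]
  have sum_resV : ∑ X : 𝔩, resV 𝔲 𝔩 f X * (starRingEnd ℂ) (g X)
      = (Nat.card 𝔲 : ℂ)⁻¹ * ∑ w, f w * gCheck w := by
    rw [sum_mul_sum_ite_eq, Fintype.sum_prod_type, Finset.mul_sum]
    simp only [resV, finsum_eq_sum_of_fintype, mul_assoc, Finset.sum_mul, Finset.mul_sum]
  have hΓ : (Nat.card Γ : ℂ) ≠ 0 := Nat.cast_ne_zero.2 Nat.card_pos.ne'
  calc (Nat.card Γ : ℂ)⁻¹ * ∑ᶠ v : V, f v * (starRingEnd ℂ) (indV Λ 𝔩 𝔲 g v)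
      = (Nat.card Γ : ℂ)⁻¹ * ((Nat.card Λ : ℂ)⁻¹ * (Nat.card 𝔲 : ℂ)⁻¹) *
          ∑ γ : Γ, ∑ v, f v * gCheck (γ • v) := by
        simp only [finsum_eq_sum_of_fintype, star_indV, Finset.mul_sum, mul_assoc, mul_left_comm]
        rw [Finset.sum_comm]
    _ = (Nat.card Λ : ℂ)⁻¹ * ((Nat.card 𝔲 : ℂ)⁻¹ * ∑ w, f w * gCheck w) := by
        rw [sum_sum_mul_comp_smul_of_invariant hf, nsmul_eq_mul, ← Nat.card_eq_fintype_card]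
        field_simp
    _ = _ := by rw [finsum_eq_sum_of_fintype, sum_resV]

/-- Adjointness of induction and restriction: for `Γ`-invariant `f : V → ℂ` and any
`g : 𝔩 → ℂ`,
`|Γ|⁻¹ · Σ_{v ∈ V} f(v) · conj(Ind g(v)) = |Λ|⁻¹ · Σ_{X ∈ 𝔩} Res f(X) · conj(g(X))`. -/
theorem ind_res_adjoint [Finite F] [Finite V] [Finite Γ]
    (hΓ_add : ∀ (γ : Γ) (x y : V), γ • (x + y) = γ • x + γ • y)
    (hΓ_smul : ∀ (γ : Γ) (c : F) (x : V), γ • (c • x) = c • (γ • x))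
    (Λ : Subgroup Γ)
    (𝔩 𝔲 : Submodule F V) (hdisj : 𝔩 ⊓ 𝔲 = ⊥)
    (f : V → ℂ) (hf : ∀ (γ : Γ) (v : V), f (γ • v) = f v)
    (g : ↥𝔩 → ℂ) :
    (Nat.card Γ : ℂ)⁻¹ * ∑ᶠ v : V, f v * (starRingEnd ℂ) (indV Λ 𝔩 𝔲 g v)
      = (Nat.card ↥Λ : ℂ)⁻¹ * ∑ᶠ X : ↥𝔩, resV 𝔲 𝔩 f X * (starRingEnd ℂ) (g X) :=
  ind_res_adjoint_general Λ 𝔩 𝔲 f hf g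

end FiniteFourier
end
end

section
/- Compatibility of the Fourier transform with induction: for every Λ-invariant function g : 𝔩 → ℂ (i.e. g(λ·X) = g(X) for all λ ∈ Λ, X ∈ 𝔩), one has |𝔲|^(1/2) · 𝓕_V(Ind g) = |𝔲′|^(1/2) · Ind*(𝓕_𝔩 g) as functions on V*. -/
/-!
STATEMENT 8: Compatibility of the Fourier transform with induction.
-/

open scoped BigOperators

noncomputable section

namespace FiniteFourier

variable {F : Type*} [Field F] {V : Type*} [AddCommGroup V] [Module F V]
variable {Γ : Type*} [Group Γ] [MulAction Γ V]

/-- Fourier transform of `f : V → ℂ`. -/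
def ftV (ψ : F → ℂ) (f : V → ℂ) : (V →ₗ[F] F) → ℂ := fun φ =>
  ((Real.sqrt (Nat.card V) : ℂ))⁻¹ * ∑ᶠ Y : V, ψ (φ Y) * f Y

/-- `l̂`: the set of functionals on `V` vanishing on `𝔲` and on `𝔲′`
(identified with the dual of `𝔩`). -/
def lhat (𝔲 𝔲' : Submodule F V) : Set (V →ₗ[F] F) :=
  {φ | (∀ x ∈ 𝔲, φ x = 0) ∧ (∀ x ∈ 𝔲', φ x = 0)}

/-- `û′`: the set of functionals on `V` vanishing on `𝔲` and on `𝔩`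
(identified with the dual of `𝔲′`, so `|û′| = |𝔲′|`). -/
def uhat' (𝔲 𝔩 : Submodule F V) : Set (V →ₗ[F] F) :=
  {φ | (∀ x ∈ 𝔲, φ x = 0) ∧ (∀ x ∈ 𝔩, φ x = 0)}

/-- Fourier transform on `𝔩`, valued on `l̂`:
`𝓕_𝔩 a (φ) = |𝔩|^(-1/2) · Σ_{X ∈ 𝔩} ψ(φ(X)) · a(X)`. -/
def ftL (ψ : F → ℂ) (𝔲 𝔩 𝔲' : Submodule F V) (a : ↥𝔩 → ℂ) : ↥(lhat 𝔲 𝔲') → ℂ := fun φ =>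
  ((Real.sqrt (Nat.card ↥𝔩) : ℂ))⁻¹ * ∑ᶠ X : ↥𝔩, ψ ((φ : V →ₗ[F] F) (X : V)) * a X

open Classical in
/-- Dual induction `Ind* k : V* → ℂ`,
`Ind* k(φ) = |Λ|⁻¹ · |û′|⁻¹ · Σ_{γ ∈ Γ with γ·φ ∈ 𝔭̂} k^∨(γ·φ)` where `𝔭̂ = l̂ ⊕ û′`,
`k^∨(ξ + η) = k(ξ)` for `ξ ∈ l̂`, `η ∈ û′`, and `Γ` acts on `V*` by the contragredient
action `(γ·φ)(v) = φ(γ⁻¹·v)` (expressed pointwise below). -/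
def indDual (Λ : Subgroup Γ) (𝔲 𝔩 𝔲' : Submodule F V) (k : ↥(lhat 𝔲 𝔲') → ℂ) :
    (V →ₗ[F] F) → ℂ := fun φ =>
  (Nat.card ↥Λ : ℂ)⁻¹ * (Nat.card ↥(uhat' 𝔲 𝔩) : ℂ)⁻¹ *
    ∑ᶠ γ : Γ, ∑ᶠ ξ : ↥(lhat 𝔲 𝔲'), ∑ᶠ η : ↥(uhat' 𝔲 𝔩),
      if (∀ v : V, φ (γ⁻¹ • v) = (ξ : V →ₗ[F] F) v + (η : V →ₗ[F] F) v)
        then k ξ else 0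

lemma sum_char_ne_one {W : Type*} [AddCommGroup W] [Fintype W]
    (χ : W → ℂ) (hadd : ∀ x y, χ (x + y) = χ x * χ y)
    (hne : ∃ w, χ w ≠ 1) : ∑ w, χ w = 0 := by
  obtain ⟨w₀, hw₀⟩ := hne
  have h1 : ∑ w, χ (w₀ + w) = ∑ w, χ w :=
    Fintype.sum_equiv (Equiv.addLeft w₀) _ _ (fun w => rfl)
  have h2 : (χ w₀ - 1) * ∑ w, χ w = 0 := by
    rw [sub_mul, one_mul, sub_eq_zero, Finset.mul_sum, ← h1]
    exact Finset.sum_congr rfl fun w _ => (hadd w₀ w).symm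
  rcases mul_eq_zero.mp h2 with h | h
  · exact absurd (sub_eq_zero.mp h) hw₀
  · exact h

open Classical in
lemma sum_char_linear {F : Type*} [Field F] {W : Type*} [AddCommGroup W] [Module F W] [Fintype W]
    (ψ : F → ℂ) (hadd : ∀ x y, ψ (x + y) = ψ x * ψ y) (hψ0 : ψ 0 = 1)
    (hne : ∃ x, ψ x ≠ 1) (L : W →ₗ[F] F) :
    ∑ w, ψ (L w) = if ∀ w, L w = 0 then (Fintype.card W : ℂ) else 0 := by
  by_cases h : ∀ w, L w = 0
  · rw [if_pos h, Finset.sum_congr rfl fun w _ => by rw [h w, hψ0]]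
    simp
  · rw [if_neg h]
    push_neg at h
    obtain ⟨w₁, hw₁⟩ := h
    obtain ⟨x₀, hx₀⟩ := hne
    refine sum_char_ne_one (fun w => ψ (L w))
      (fun x y => by show ψ (L (x + y)) = _; rw [map_add, hadd]) ?_
    refine ⟨(x₀ * (L w₁)⁻¹) • w₁, ?_⟩
    show ψ (L ((x₀ * (L w₁)⁻¹) • w₁)) ≠ 1
    rw [map_smul, smul_eq_mul, mul_assoc, inv_mul_cancel₀ hw₁, mul_one]
    exact hx₀

/-- Compatibility of the Fourier transform with induction: for `V = 𝔲 ⊕ 𝔩 ⊕ 𝔲′` and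
every `Λ`-invariant `g : 𝔩 → ℂ`,
`|𝔲|^(1/2) · 𝓕_V(Ind g) = |𝔲′|^(1/2) · Ind*(𝓕_𝔩 g)` as functions on `V*`. -/
theorem fourier_ind_compat [Finite F] [Finite V] [Finite Γ]
    (ψ : F → ℂ)
    (hψ_add : ∀ x y : F, ψ (x + y) = ψ x * ψ y)
    (hψ_ne : ∃ x : F, ψ x ≠ 1)
    (hΓ_add : ∀ (γ : Γ) (x y : V), γ • (x + y) = γ • x + γ • y)
    (hΓ_smul : ∀ (γ : Γ) (c : F) (x : V), γ • (c • x) = c • (γ • x))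
    (𝔲 𝔩 𝔲' : Submodule F V)
    (hV : DirectSum.IsInternal (![𝔲, 𝔩, 𝔲'] : Fin 3 → Submodule F V))
    (Λ : Subgroup Γ)
    (hΛ𝔩 : ∀ γ ∈ Λ, ∀ x ∈ 𝔩, γ • x ∈ 𝔩)
    (hΛ𝔲 : ∀ γ ∈ Λ, ∀ x ∈ 𝔲, γ • x ∈ 𝔲)
    (hΛ𝔲' : ∀ γ ∈ Λ, ∀ x ∈ 𝔲', γ • x ∈ 𝔲')
    (g : ↥𝔩 → ℂ)
    (hg : ∀ γ ∈ Λ, ∀ X Y : ↥𝔩, γ • (X : V) = (Y : V) → g Y = g X) :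
    (fun φ : V →ₗ[F] F => (Real.sqrt (Nat.card ↥𝔲) : ℂ) * ftV ψ (indV Λ 𝔩 𝔲 g) φ)
      = fun φ : V →ₗ[F] F =>
        (Real.sqrt (Nat.card ↥𝔲') : ℂ) * indDual Λ 𝔲 𝔩 𝔲' (ftL ψ 𝔲 𝔩 𝔲' g) φ := by
  classical
  letI : Fintype V := Fintype.ofFinite V
  letI : Fintype Γ := Fintype.ofFinite Γ
  haveI : Finite (V →ₗ[F] F) :=
    Finite.of_injective (fun f => (f : V → F)) DFunLike.coe_injective
  letI : Fintype (V →ₗ[F] F) := Fintype.ofFinite _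
  -- degenerate case : ψ ≡ 0
  rcases eq_or_ne (ψ 0) 1 with hψ0 | hψ0'
  swap
  · have hz : ∀ x, ψ x = 0 := by
      have h00 : ψ 0 * (ψ 0 - 1) = 0 := by
        rw [mul_sub, mul_one, sub_eq_zero, ← hψ_add, add_zero]
      have h0 : ψ 0 = 0 := by
        rcases mul_eq_zero.mp h00 with h | h
        · exact h
        · exact absurd (sub_eq_zero.mp h) hψ0'
      intro x
      rw [← add_zero x, hψ_add, h0, mul_zero]
    funext φ
    have hL : ftV ψ (indV Λ 𝔩 𝔲 g) φ = 0 := by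
      simp [ftV, hz]
    have hftL : ∀ ξ, ftL ψ 𝔲 𝔩 𝔲' g ξ = 0 := by
      intro ξ; simp [ftL, hz]
    have hR : indDual Λ 𝔲 𝔩 𝔲' (ftL ψ 𝔲 𝔩 𝔲' g) φ = 0 := by
      simp [indDual, hftL]
    rw [hL, hR, mul_zero, mul_zero]
  -- main case
  -- spanning
  have hsup : 𝔲 ⊔ 𝔩 ⊔ 𝔲' = ⊤ := by
    have h := hV.submodule_iSup_eq_top
    rw [← h]
    apply le_antisymm
    · refine sup_le (sup_le ?_ ?_) ?_
      · simpa using le_iSup ![𝔲, 𝔩, 𝔲'] 0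
      · simpa using le_iSup ![𝔲, 𝔩, 𝔲'] 1
      · simpa using le_iSup ![𝔲, 𝔩, 𝔲'] 2
    · refine iSup_le fun i => ?_
      fin_cases i
      · exact le_sup_of_le_left le_sup_left
      · exact le_sup_of_le_left le_sup_right
      · exact le_sup_right
  have hex : ∀ v : V, ∃ u ∈ 𝔲, ∃ x ∈ 𝔩, ∃ w ∈ 𝔲', v = u + x + w := by
    intro v
    have hv : v ∈ 𝔲 ⊔ 𝔩 ⊔ 𝔲' := by rw [hsup]; trivial
    obtain ⟨a, ha, w, hw, hv'⟩ := Submodule.mem_sup.mp hv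
    obtain ⟨u, hu, x, hx, ha'⟩ := Submodule.mem_sup.mp ha
    exact ⟨u, hu, x, hx, w, hw, by rw [← hv', ← ha']⟩
  have hindep := hV.submodule_iSupIndep
  have hdisjU : Disjoint 𝔲 (𝔩 ⊔ 𝔲') := by
    refine (hindep (i := 0)).mono_right (sup_le ?_ ?_)
    · exact le_iSup_of_le 1 (le_iSup_of_le (by decide) (by simp))
    · exact le_iSup_of_le 2 (le_iSup_of_le (by decide) (by simp))
  have hdisjL : Disjoint 𝔩 𝔲' := by
    refine (hindep (i := 1)).mono_right ?_
    exact le_iSup_of_le 2 (le_iSup_of_le (by decide) (by simp))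
  have huniq0 : ∀ u ∈ 𝔲, ∀ x ∈ 𝔩, ∀ w ∈ 𝔲', u + x + w = 0 →
      u = 0 ∧ x = 0 ∧ w = 0 := by
    intro u hu x hx w hw h
    have hu0 : u = 0 := by
      have h1 : u ∈ 𝔩 ⊔ 𝔲' := by
        have : u = -x + -w := by linear_combination (norm := abel) h
        rw [this]
        exact Submodule.add_mem_sup (neg_mem hx) (neg_mem hw)
      exact (Submodule.disjoint_def.mp hdisjU) u hu h1
    have hx0 : x = 0 := by
      have h2 : x ∈ 𝔲' := by
        have : x = -w := by rw [hu0] at h; linear_combination (norm := abel) h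
        rw [this]; exact neg_mem hw
      exact (Submodule.disjoint_def.mp hdisjL) x hx h2
    refine ⟨hu0, hx0, ?_⟩
    rw [hu0, hx0] at h; simpa using h
  have huniq : ∀ u₁ ∈ 𝔲, ∀ x₁ ∈ 𝔩, ∀ w₁ ∈ 𝔲', ∀ u₂ ∈ 𝔲, ∀ x₂ ∈ 𝔩, ∀ w₂ ∈ 𝔲',
      u₁ + x₁ + w₁ = u₂ + x₂ + w₂ → u₁ = u₂ ∧ x₁ = x₂ ∧ w₁ = w₂ := by
    intro u₁ hu₁ x₁ hx₁ w₁ hw₁ u₂ hu₂ x₂ hx₂ w₂ hw₂ h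
    have h0 := huniq0 (u₁ - u₂) (sub_mem hu₁ hu₂) (x₁ - x₂) (sub_mem hx₁ hx₂)
      (w₁ - w₂) (sub_mem hw₁ hw₂) (by linear_combination (norm := abel) h)
    exact ⟨by linear_combination (norm := abel) h0.1,
      by linear_combination (norm := abel) h0.2.1,
      by linear_combination (norm := abel) h0.2.2⟩
  -- the linear equivalence
  let T : (↥𝔲 × ↥𝔩 × ↥𝔲') →ₗ[F] V :=
    { toFun := fun p => (p.1 : V) + (p.2.1 : V) + (p.2.2 : V)
      map_add' := fun p q => by
        simp only [Prod.fst_add, Prod.snd_add, Submodule.coe_add]; abel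
      map_smul' := fun c p => by
        simp only [Prod.smul_fst, Prod.smul_snd, SetLike.val_smul, smul_add,
          RingHom.id_apply] }
  have hTbij : Function.Bijective T := by
    constructor
    · intro p q h
      obtain ⟨h1, h2, h3⟩ := huniq _ p.1.2 _ p.2.1.2 _ p.2.2.2 _ q.1.2 _ q.2.1.2 _ q.2.2.2 h
      exact Prod.ext (Subtype.ext h1) (Prod.ext (Subtype.ext h2) (Subtype.ext h3))
    · intro v
      obtain ⟨u, hu, x, hx, w, hw, hv⟩ := hex v
      exact ⟨(⟨u, hu⟩, ⟨x, hx⟩, ⟨w, hw⟩), hv.symm⟩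
  let E : (↥𝔲 × ↥𝔩 × ↥𝔲') ≃ₗ[F] V := LinearEquiv.ofBijective T hTbij
  let πU : V →ₗ[F] ↥𝔲 := (LinearMap.fst F ↥𝔲 (↥𝔩 × ↥𝔲')).comp E.symm.toLinearMap
  let πL : V →ₗ[F] ↥𝔩 :=
    (LinearMap.fst F ↥𝔩 ↥𝔲').comp ((LinearMap.snd F ↥𝔲 (↥𝔩 × ↥𝔲')).comp E.symm.toLinearMap)
  let πW : V →ₗ[F] ↥𝔲' :=
    (LinearMap.snd F ↥𝔩 ↥𝔲').comp ((LinearMap.snd F ↥𝔲 (↥𝔩 × ↥𝔲')).comp E.symm.toLinearMap)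
  have hEsymm : ∀ (u : ↥𝔲) (x : ↥𝔩) (w : ↥𝔲'),
      E.symm ((u : V) + (x : V) + (w : V)) = (u, x, w) := by
    intro u x w
    apply E.injective
    rw [E.apply_symm_apply]
    rfl
  have hdecomp : ∀ v : V, v = (πU v : V) + (πL v : V) + (πW v : V) := by
    intro v
    conv_lhs => rw [← E.apply_symm_apply v]
    rfl
  have hπU_val : ∀ u (hu : u ∈ 𝔲), (πU u : ↥𝔲) = ⟨u, hu⟩ ∧ πL u = 0 ∧ πW u = 0 := by
    intro u hu
    have h := hEsymm ⟨u, hu⟩ 0 0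
    simp only [ZeroMemClass.coe_zero, add_zero] at h
    exact ⟨congrArg Prod.fst h, congrArg (Prod.fst ∘ Prod.snd) h,
      congrArg (Prod.snd ∘ Prod.snd) h⟩
  have hπL_val : ∀ x (hx : x ∈ 𝔩), πU x = 0 ∧ (πL x : ↥𝔩) = ⟨x, hx⟩ ∧ πW x = 0 := by
    intro x hx
    have h := hEsymm 0 ⟨x, hx⟩ 0
    simp only [ZeroMemClass.coe_zero, add_zero, zero_add] at h
    exact ⟨congrArg Prod.fst h, congrArg (Prod.fst ∘ Prod.snd) h,
      congrArg (Prod.snd ∘ Prod.snd) h⟩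
  have hπW_val : ∀ w (hw : w ∈ 𝔲'), πU w = 0 ∧ πL w = 0 ∧ (πW w : ↥𝔲') = ⟨w, hw⟩ := by
    intro w hw
    have h := hEsymm 0 0 ⟨w, hw⟩
    simp only [ZeroMemClass.coe_zero, add_zero, zero_add] at h
    exact ⟨congrArg Prod.fst h, congrArg (Prod.fst ∘ Prod.snd) h,
      congrArg (Prod.snd ∘ Prod.snd) h⟩
  have hext : ∀ f₁ f₂ : V →ₗ[F] F, (∀ u ∈ 𝔲, f₁ u = f₂ u) → (∀ x ∈ 𝔩, f₁ x = f₂ x) →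
      (∀ w ∈ 𝔲', f₁ w = f₂ w) → f₁ = f₂ := by
    intro f₁ f₂ h1 h2 h3
    ext v
    obtain ⟨u, hu, x, hx, w, hw, rfl⟩ := hex v
    simp only [map_add, h1 u hu, h2 x hx, h3 w hw]
  have hcardV : Nat.card V = Nat.card ↥𝔲 * (Nat.card ↥𝔩 * Nat.card ↥𝔲') := by
    rw [← Nat.card_prod, ← Nat.card_prod]
    exact (Nat.card_congr E.toEquiv).symm
  -- cardinality of uhat'
  have hres_bij : Function.Bijective
      (fun φ : ↥(uhat' 𝔲 𝔩) => ((φ : V →ₗ[F] F).comp 𝔲'.subtype)) := by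
    constructor
    · intro φ₁ φ₂ h
      refine Subtype.ext (hext _ _ ?_ ?_ ?_)
      · intro u hu; rw [φ₁.2.1 u hu, φ₂.2.1 u hu]
      · intro x hx; rw [φ₁.2.2 x hx, φ₂.2.2 x hx]
      · intro w hw
        exact congrArg (fun f : ↥𝔲' →ₗ[F] F => f ⟨w, hw⟩) h
    · intro ζ
      refine ⟨⟨ζ.comp πW, ?_, ?_⟩, ?_⟩
      · intro u hu
        show ζ (πW u) = 0
        rw [(hπU_val u hu).2.2, map_zero]
      · intro x hx
        show ζ (πW x) = 0
        rw [(hπL_val x hx).2.2, map_zero]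
      · ext w
        show ζ (πW (w : V)) = ζ w
        rw [(hπW_val (w : V) w.2).2.2]
  have hcard_uhat : Nat.card ↥(uhat' 𝔲 𝔩) = Nat.card ↥𝔲' := by
    have e1 : ↥(uhat' 𝔲 𝔩) ≃ (↥𝔲' →ₗ[F] F) := Equiv.ofBijective _ hres_bij
    have e2 : ↥𝔲' ≃ (↥𝔲' →ₗ[F] F) := (Module.finBasis F ↥𝔲').toDualEquiv.toEquiv
    rw [Nat.card_congr e1, Nat.card_congr e2]
  funext φ
  -- the contragredient functional, bundled
  let Φ : Γ → (V →ₗ[F] F) := fun γ =>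
    { toFun := fun v => φ (γ⁻¹ • v)
      map_add' := fun a b => by
        show φ (γ⁻¹ • (a + b)) = φ (γ⁻¹ • a) + φ (γ⁻¹ • b)
        rw [hΓ_add, map_add]
      map_smul' := fun c a => by
        show φ (γ⁻¹ • (c • a)) = c • φ (γ⁻¹ • a)
        rw [hΓ_smul, map_smul] }
  have hΦapp : ∀ (γ : Γ) (v : V), Φ γ v = φ (γ⁻¹ • v) := fun _ _ => rfl
  let C : Γ → Prop := fun γ => ∀ N : ↥𝔲, φ (γ⁻¹ • (N : V)) = 0
  let S : Γ → ℂ := fun γ => ∑ X : ↥𝔩, ψ (φ (γ⁻¹ • (X : V))) * g X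
  have keyL : ∀ γ : Γ, (∑ Y : V, ψ (φ Y) *
      ∑ X : ↥𝔩, ∑ N : ↥𝔲, (if γ • Y = (X : V) + (N : V) then g X else 0))
      = if C γ then (Nat.card ↥𝔲 : ℂ) * S γ else 0 := by
    intro γ
    calc ∑ Y : V, ψ (φ Y) *
          ∑ X : ↥𝔩, ∑ N : ↥𝔲, (if γ • Y = (X : V) + (N : V) then g X else 0)
        = ∑ Y : V, ∑ X : ↥𝔩, ∑ N : ↥𝔲,
            (if Y = γ⁻¹ • ((X : V) + (N : V)) then ψ (φ Y) * g X else 0) := by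
          simp only [Finset.mul_sum, mul_ite, mul_zero, smul_eq_iff_eq_inv_smul]
      _ = ∑ X : ↥𝔩, ∑ N : ↥𝔲, ∑ Y : V,
            (if Y = γ⁻¹ • ((X : V) + (N : V)) then ψ (φ Y) * g X else 0) := by
          rw [Finset.sum_comm]
          exact Finset.sum_congr rfl fun X _ => Finset.sum_comm
      _ = ∑ X : ↥𝔩, ∑ N : ↥𝔲, ψ (φ (γ⁻¹ • ((X : V) + (N : V)))) * g X := by
          refine Finset.sum_congr rfl fun X _ => Finset.sum_congr rfl fun N _ => ?_
          rw [Finset.sum_ite_eq' Finset.univ, if_pos (Finset.mem_univ _)]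
      _ = ∑ X : ↥𝔩, ∑ N : ↥𝔲, (ψ (φ (γ⁻¹ • (X : V))) * g X) * ψ (φ (γ⁻¹ • (N : V))) := by
          refine Finset.sum_congr rfl fun X _ => Finset.sum_congr rfl fun N _ => ?_
          rw [hΓ_add, map_add, hψ_add]; ring
      _ = (∑ X : ↥𝔩, ψ (φ (γ⁻¹ • (X : V))) * g X) * ∑ N : ↥𝔲, ψ (φ (γ⁻¹ • (N : V))) := by
          rw [Finset.sum_mul]
          exact Finset.sum_congr rfl fun X _ => (Finset.mul_sum _ _ _).symm
      _ = S γ * (if C γ then (Fintype.card ↥𝔲 : ℂ) else 0) := by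
          congr 1
          have h := sum_char_linear ψ hψ_add hψ0 hψ_ne ((Φ γ).comp 𝔲.subtype)
          simp only [LinearMap.comp_apply, Submodule.subtype_apply, hΦapp] at h
          exact h
      _ = if C γ then (Nat.card ↥𝔲 : ℂ) * S γ else 0 := by
          rw [Nat.card_eq_fintype_card]
          split_ifs <;> ring
  have keyR : ∀ γ : Γ, (∑ ξ : ↥(lhat 𝔲 𝔲'), ∑ η : ↥(uhat' 𝔲 𝔩),
      (@ite ℂ (∀ v : V, φ (γ⁻¹ • v) = (ξ : V →ₗ[F] F) v + (η : V →ₗ[F] F) v)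
        (Classical.propDecidable _) (ftL ψ 𝔲 𝔩 𝔲' g ξ) 0))
      = if C γ then ((Real.sqrt (Nat.card ↥𝔩) : ℂ))⁻¹ * S γ else 0 := by
    intro γ
    by_cases hC : C γ
    · rw [if_pos hC]
      set ξ₀ : V →ₗ[F] F := (Φ γ).comp (𝔩.subtype.comp πL) with hξ₀def
      set η₀ : V →ₗ[F] F := (Φ γ).comp (𝔲'.subtype.comp πW) with hη₀def
      have hξ₀app : ∀ v : V, ξ₀ v = Φ γ ((πL v : V)) := fun _ => rfl
      have hη₀app : ∀ v : V, η₀ v = Φ γ ((πW v : V)) := fun _ => rfl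
      have hξ₀mem : ξ₀ ∈ lhat 𝔲 𝔲' := by
        constructor
        · intro u hu
          rw [hξ₀app, (hπU_val u hu).2.1, ZeroMemClass.coe_zero, map_zero]
        · intro w hw
          rw [hξ₀app, (hπW_val w hw).2.1, ZeroMemClass.coe_zero, map_zero]
      have hη₀mem : η₀ ∈ uhat' 𝔲 𝔩 := by
        constructor
        · intro u hu
          rw [hη₀app, (hπU_val u hu).2.2, ZeroMemClass.coe_zero, map_zero]
        · intro x hx
          rw [hη₀app, (hπL_val x hx).2.2, ZeroMemClass.coe_zero, map_zero]
      have hsum : ∀ v : V, φ (γ⁻¹ • v) = ξ₀ v + η₀ v := by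
        intro v
        rw [← hΦapp, hξ₀app, hη₀app]
        conv_lhs => rw [hdecomp v]
        rw [map_add, map_add, hΦapp γ ((πU v : V)), hC (πU v), zero_add]
      set Ξ : ↥(lhat 𝔲 𝔲') := ⟨ξ₀, hξ₀mem⟩ with hΞdef
      set Η : ↥(uhat' 𝔲 𝔩) := ⟨η₀, hη₀mem⟩ with hΗdef
      have hcond : ∀ (ξ : ↥(lhat 𝔲 𝔲')) (η : ↥(uhat' 𝔲 𝔩)),
          (∀ v : V, φ (γ⁻¹ • v) = (ξ : V →ₗ[F] F) v + (η : V →ₗ[F] F) v) ↔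
            (ξ = Ξ ∧ η = Η) := by
        intro ξ η
        constructor
        · intro h
          have hξ : (ξ : V →ₗ[F] F) = ξ₀ := by
            refine hext _ _ ?_ ?_ ?_
            · intro u hu; rw [ξ.2.1 u hu, hξ₀mem.1 u hu]
            · intro x hx
              have h1 := h x
              rw [η.2.2 x hx, add_zero] at h1
              rw [← h1, hξ₀app, (hπL_val x hx).2.1]
              rfl
            · intro w hw; rw [ξ.2.2 w hw, hξ₀mem.2 w hw]
          have hη : (η : V →ₗ[F] F) = η₀ := by
            ext v
            have h1 := h v
            have h2 := hsum v
            rw [hξ] at h1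
            linear_combination h2 - h1
          exact ⟨Subtype.ext hξ, Subtype.ext hη⟩
        · rintro ⟨rfl, rfl⟩
          exact hsum
      calc ∑ ξ : ↥(lhat 𝔲 𝔲'), ∑ η : ↥(uhat' 𝔲 𝔩),
            (@ite ℂ (∀ v : V, φ (γ⁻¹ • v) = (ξ : V →ₗ[F] F) v + (η : V →ₗ[F] F) v)
              (Classical.propDecidable _) (ftL ψ 𝔲 𝔩 𝔲' g ξ) 0)
          = ∑ ξ : ↥(lhat 𝔲 𝔲'), ∑ η : ↥(uhat' 𝔲 𝔩),
              (if (ξ = Ξ ∧ η = Η) then ftL ψ 𝔲 𝔩 𝔲' g ξ else 0) := by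
            refine Finset.sum_congr rfl fun ξ _ => Finset.sum_congr rfl fun η _ => ?_
            simp only [hcond ξ η]
        _ = ftL ψ 𝔲 𝔩 𝔲' g Ξ := by
            rw [Finset.sum_eq_single_of_mem Ξ (Finset.mem_univ _)
              (fun ξ _ hne => Finset.sum_eq_zero fun η _ => if_neg fun hc => hne hc.1),
              Finset.sum_eq_single_of_mem Η (Finset.mem_univ _)
              (fun η _ hne => if_neg fun hc => hne hc.2),
              if_pos ⟨rfl, rfl⟩]
        _ = ((Real.sqrt (Nat.card ↥𝔩) : ℂ))⁻¹ * S γ := by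
            rw [ftL, finsum_eq_sum_of_fintype]
            congr 1
            refine Finset.sum_congr rfl fun X _ => ?_
            have hval : (Ξ : V →ₗ[F] F) (X : V) = φ (γ⁻¹ • (X : V)) := by
              show ξ₀ (X : V) = _
              rw [hξ₀app, (hπL_val (X : V) X.2).2.1]
              rfl
            rw [hval]
    · rw [if_neg hC]
      refine Finset.sum_eq_zero fun ξ _ => Finset.sum_eq_zero fun η _ => if_neg ?_
      intro h
      apply hC
      intro N
      rw [h (N : V), ξ.2.1 (N : V) N.2, η.2.1 (N : V) N.2, add_zero]
  -- assemble
  rw [ftV, indDual]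
  simp only [indV, finsum_eq_sum_of_fintype]
  have hswap : ∀ (k : ℂ) (A : Γ → V → ℂ),
      (∑ Y : V, ψ (φ Y) * (k * ∑ γ : Γ, A γ Y)) = k * ∑ γ : Γ, ∑ Y : V, ψ (φ Y) * A γ Y := by
    intro k A
    calc ∑ Y : V, ψ (φ Y) * (k * ∑ γ : Γ, A γ Y)
        = ∑ Y : V, ∑ γ : Γ, k * (ψ (φ Y) * A γ Y) := by
          refine Finset.sum_congr rfl fun Y _ => ?_
          rw [Finset.mul_sum, Finset.mul_sum]
          exact Finset.sum_congr rfl fun γ _ => by ring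
      _ = ∑ γ : Γ, ∑ Y : V, k * (ψ (φ Y) * A γ Y) := Finset.sum_comm
      _ = k * ∑ γ : Γ, ∑ Y : V, ψ (φ Y) * A γ Y := by
          rw [Finset.mul_sum]
          exact Finset.sum_congr rfl fun γ _ => (Finset.mul_sum _ _ _).symm
  rw [hswap ((Nat.card ↥Λ : ℂ)⁻¹ * (Nat.card ↥𝔲 : ℂ)⁻¹)]
  have hsumL : (∑ γ : Γ, ∑ Y : V, ψ (φ Y) *
      ∑ X : ↥𝔩, ∑ N : ↥𝔲, (if γ • Y = (X : V) + (N : V) then g X else 0))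
      = (Nat.card ↥𝔲 : ℂ) * ∑ γ : Γ, (if C γ then S γ else 0) := by
    rw [Finset.mul_sum]
    refine Finset.sum_congr rfl fun γ _ => ?_
    rw [keyL γ]
    split_ifs <;> ring
  rw [hsumL]
  have hsumR : (∑ γ : Γ, ∑ ξ : ↥(lhat 𝔲 𝔲'), ∑ η : ↥(uhat' 𝔲 𝔩),
      (@ite ℂ (∀ v : V, φ (γ⁻¹ • v) = (ξ : V →ₗ[F] F) v + (η : V →ₗ[F] F) v)
        (Classical.propDecidable _) (ftL ψ 𝔲 𝔩 𝔲' g ξ) 0))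
      = ((Real.sqrt (Nat.card ↥𝔩) : ℂ))⁻¹ * ∑ γ : Γ, (if C γ then S γ else 0) := by
    rw [Finset.mul_sum]
    refine Finset.sum_congr rfl fun γ _ => ?_
    rw [keyR γ]
    split_ifs <;> ring
  rw [hsumR, hcard_uhat]
  -- constants
  have hsqrtV : Real.sqrt (Nat.card V) =
      Real.sqrt (Nat.card ↥𝔲) * (Real.sqrt (Nat.card ↥𝔩) * Real.sqrt (Nat.card ↥𝔲')) := by
    rw [hcardV]
    push_cast
    rw [Real.sqrt_mul (by positivity), Real.sqrt_mul (by positivity)]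
  rw [hsqrtV]
  have hU0 : (0 : ℝ) < ((Nat.card ↥𝔲 : ℕ) : ℝ) := by exact_mod_cast Nat.card_pos
  have hL0 : (0 : ℝ) < ((Nat.card ↥𝔩 : ℕ) : ℝ) := by exact_mod_cast Nat.card_pos
  have hW0 : (0 : ℝ) < ((Nat.card ↥𝔲' : ℕ) : ℝ) := by exact_mod_cast Nat.card_pos
  have hsU : ((Real.sqrt (Nat.card ↥𝔲) : ℝ) : ℂ) ≠ 0 := by
    exact_mod_cast (Real.sqrt_pos.mpr hU0).ne'
  have hsL : ((Real.sqrt (Nat.card ↥𝔩) : ℝ) : ℂ) ≠ 0 := by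
    exact_mod_cast (Real.sqrt_pos.mpr hL0).ne'
  have hsW : ((Real.sqrt (Nat.card ↥𝔲') : ℝ) : ℂ) ≠ 0 := by
    exact_mod_cast (Real.sqrt_pos.mpr hW0).ne'
  have hmulU : ((Real.sqrt (Nat.card ↥𝔲) : ℝ) : ℂ) * ((Real.sqrt (Nat.card ↥𝔲) : ℝ) : ℂ)
      = (Nat.card ↥𝔲 : ℂ) := by
    rw [← Complex.ofReal_mul, Real.mul_self_sqrt hU0.le]
    push_cast; ring
  have hmulW : ((Real.sqrt (Nat.card ↥𝔲') : ℝ) : ℂ) * ((Real.sqrt (Nat.card ↥𝔲') : ℝ) : ℂ)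
      = (Nat.card ↥𝔲' : ℂ) := by
    rw [← Complex.ofReal_mul, Real.mul_self_sqrt hW0.le]
    push_cast; ring
  have hcU : (Nat.card ↥𝔲 : ℂ) ≠ 0 := by rw [← hmulU]; exact mul_ne_zero hsU hsU
  have hcW : (Nat.card ↥𝔲' : ℂ) ≠ 0 := by rw [← hmulW]; exact mul_ne_zero hsW hsW
  have hcL : (Nat.card ↥Λ : ℂ) ≠ 0 := by
    exact_mod_cast (Nat.card_pos (α := ↥Λ)).ne'
  rw [Complex.ofReal_mul, Complex.ofReal_mul, ← hmulU, ← hmulW]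
  have key : ∀ (a b c l Sig : ℂ), a ≠ 0 → b ≠ 0 → c ≠ 0 → l ≠ 0 →
      a * ((a * (b * c))⁻¹ * (l⁻¹ * (a * a)⁻¹ * (a * a * Sig)))
        = c * (l⁻¹ * (c * c)⁻¹ * (b⁻¹ * Sig)) := by
    intro a b c l Sig ha hb hc hl
    field_simp
  exact key _ _ _ _ _ hsU hsL hsW hcL

end FiniteFourier
end
end
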